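/- For bounded linear operators B, C on a complex Hilbert space, w(BC)^2 ≤ (1/2)‖ |B*|⁴ + |C|⁴ ‖, where |T| = (T*T)^{1/2} and w is the numerical radius. -/

import Mathlib

open ContinuousLinearMap

variable {H : Type*} [NormedAddCommGroup H] [InnerProductSpace ℂ H] [CompleteSpace H]

noncomputable def numRadius (A : H →L[ℂ] H) : ℝ :=
  ⨆ x : {x : H // ‖x‖ = 1}, ‖(inner ℂ (A x) (x : H) : ℂ)‖

noncomputable def absOp (A : H →L[ℂ] H) : H →L[ℂ] H := CFC.sqrt (adjoint A * A)

set_option maxHeartbeats 1000000 in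
set_option synthInstance.maxHeartbeats 400000 in
lemma absOp_pow_four (A : H →L[ℂ] H) : absOp A ^ 4 = (adjoint A * A) ^ 2 := by
  have h : CFC.sqrt (adjoint A * A) ^ 2 = adjoint A * A := by
    apply CFC.sq_sqrt
    rw [← ContinuousLinearMap.star_eq_adjoint]; exact star_mul_self_nonneg A
  have : absOp A ^ 4 = (CFC.sqrt (adjoint A * A) ^ 2) ^ 2 := by
    rw [absOp, ← pow_mul]
  rw [this, h]

lemma inner_adjoint_mul_self (A : H →L[ℂ] H) (x : H) :
    (inner ℂ ((adjoint A * A) x) x : ℂ) = (‖A x‖ : ℂ) ^ 2 := by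
  rw [ContinuousLinearMap.mul_apply, adjoint_inner_left, inner_self_eq_norm_sq_to_K]
  norm_num

lemma inner_adjoint_mul_self_sq (A : H →L[ℂ] H) (x : H) :
    (inner ℂ (((adjoint A * A) ^ 2) x) x : ℂ) = (‖(adjoint A * A) x‖ : ℂ) ^ 2 := by
  rw [pow_two, ContinuousLinearMap.mul_apply]
  rw [ContinuousLinearMap.mul_apply, adjoint_inner_left, ← adjoint_inner_right,
    ← ContinuousLinearMap.mul_apply (adjoint A) A, inner_self_eq_norm_sq_to_K]
  norm_num

theorem stmt4 (B C : H →L[ℂ] H) :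
    numRadius (B * C) ^ 2 ≤ (1 / 2) * ‖absOp (adjoint B) ^ 4 + absOp C ^ 4‖ := by
  set S : H →L[ℂ] H := absOp (adjoint B) ^ 4 + absOp C ^ 4 with hS
  have hSeq : S = (B * adjoint B) ^ 2 + (adjoint C * C) ^ 2 := by
    rw [hS, absOp_pow_four, absOp_pow_four, adjoint_adjoint]
  have hSnn : (0:ℝ) ≤ ‖S‖ := norm_nonneg _
  -- pointwise bound
  have key : ∀ x : H, ‖x‖ = 1 → ‖(inner ℂ ((B * C) x) x : ℂ)‖ ^ 2 ≤ (1/2) * ‖S‖ := by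
    intro x hx
    set a := ‖C x‖ with ha
    set b := ‖(adjoint B) x‖ with hb
    set u := ‖(adjoint C * C) x‖ with hu
    set v := ‖(B * adjoint B) x‖ with hv
    have h1 : ‖(inner ℂ ((B * C) x) x : ℂ)‖ ≤ a * b := by
      have : (inner ℂ ((B * C) x) x : ℂ) = inner ℂ (C x) ((adjoint B) x) := by
        rw [ContinuousLinearMap.mul_apply, ← adjoint_inner_left, adjoint_adjoint]
      rw [this]
      exact norm_inner_le_norm _ _
    have h2 : a ^ 2 ≤ u := by
      have e : ‖(inner ℂ ((adjoint C * C) x) x : ℂ)‖ = a ^ 2 := by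
        rw [inner_adjoint_mul_self]
        simp [← ha]
      calc a ^ 2 = ‖(inner ℂ ((adjoint C * C) x) x : ℂ)‖ := e.symm
        _ ≤ ‖(adjoint C * C) x‖ * ‖x‖ := norm_inner_le_norm _ _
        _ = u := by rw [hx, mul_one]
    have h3 : b ^ 2 ≤ v := by
      have e : ‖(inner ℂ ((B * adjoint B) x) x : ℂ)‖ = b ^ 2 := by
        have := inner_adjoint_mul_self (adjoint B) x
        rw [adjoint_adjoint] at this
        rw [this]
        simp [← hb]
      calc b ^ 2 = ‖(inner ℂ ((B * adjoint B) x) x : ℂ)‖ := e.symm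
        _ ≤ ‖(B * adjoint B) x‖ * ‖x‖ := norm_inner_le_norm _ _
        _ = v := by rw [hx, mul_one]
    have h4 : u ^ 2 + v ^ 2 ≤ ‖S‖ := by
      have eS : (inner ℂ (S x) x : ℂ) = (v : ℂ) ^ 2 + (u : ℂ) ^ 2 := by
        have e1 := inner_adjoint_mul_self_sq (adjoint B) x
        rw [adjoint_adjoint] at e1
        have e2 := inner_adjoint_mul_self_sq C x
        rw [hSeq]
        simp only [ContinuousLinearMap.add_apply, inner_add_left, e1, e2]
        rfl
      have : ‖(inner ℂ (S x) x : ℂ)‖ = u ^ 2 + v ^ 2 := by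
        rw [eS]
        have : ((v:ℂ)^2 + (u:ℂ)^2) = ((v^2 + u^2 : ℝ) : ℂ) := by push_cast; ring
        rw [this, Complex.norm_real, Real.norm_eq_abs, abs_of_nonneg (by positivity)]
        ring
      calc u ^ 2 + v ^ 2 = ‖(inner ℂ (S x) x : ℂ)‖ := this.symm
        _ ≤ ‖S x‖ * ‖x‖ := norm_inner_le_norm _ _
        _ ≤ (‖S‖ * ‖x‖) * ‖x‖ := by
            gcongr; exact le_opNorm S x
        _ = ‖S‖ := by rw [hx]; ring
    have hnn : (0:ℝ) ≤ ‖(inner ℂ ((B * C) x) x : ℂ)‖ := norm_nonneg _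
    have han : 0 ≤ a := norm_nonneg _
    have hbn : 0 ≤ b := norm_nonneg _
    nlinarith [sq_nonneg (u - v), sq_nonneg (a*b), mul_le_mul h2 h3 (by positivity) (le_trans (by positivity) h2)]
  have hbound : numRadius (B * C) ≤ Real.sqrt ((1/2) * ‖S‖) := by
    apply Real.iSup_le _ (Real.sqrt_nonneg _)
    rintro ⟨x, hx⟩
    exact (Real.le_sqrt (norm_nonneg _) (by positivity)).mpr (key x hx)
  have hnr : 0 ≤ numRadius (B * C) :=
    Real.iSup_nonneg (fun _ => norm_nonneg _)
  calc numRadius (B * C) ^ 2 ≤ Real.sqrt ((1/2) * ‖S‖) ^ 2 := by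
        exact pow_le_pow_left₀ hnr hbound 2
    _ = (1/2) * ‖S‖ := Real.sq_sqrt (by positivity)
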